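/- Let A ∈ ℝ. Define φ : ℝ⁴ → ℝ⁵ by φ(y₁,y₂,x₁,x₂) = (y₁², y₂, x₂, y₁x₁, 3x₁² + 2y₁²y₂). Then F₂ ∘ φ = 3 H₂, where F₂(z) = 9A² z₁² + z₅² + 6A z₁ z₅ − 2 z₁³ − 24A z₁² z₂ − 12 z₁ z₃ z₄ + 24 z₂ z₄² − 16 z₁² z₂² and H₂(y₁,y₂,x₁,x₂) = 3x₁⁴ + 6A x₁² y₁² + 12 x₁² y₁² y₂ − 4 x₁ x₂ y₁³ − 4A y₁⁴ y₂ − 4 y₁⁴ y₂² + 3A² y₁⁴ − (2/3) y₁⁶. -/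
import Mathlib


/-- The morphism φ(y₁,y₂,x₁,x₂) = (y₁², y₂, x₂, y₁x₁, 3x₁² + 2y₁²y₂) pulls the
invariant F₂ of the five-dimensional system back to three times the Hénon–Heiles
second invariant H₂ (case ε = 16, B = 16A): F₂ ∘ φ = 3 H₂. -/
theorem F2_comp_phi_eq_3H2 (A : ℝ) :
    ∀ y₁ y₂ x₁ x₂ : ℝ,
      (fun z₁ z₂ z₃ z₄ z₅ : ℝ =>
          9 * A^2 * z₁^2 + z₅^2 + 6 * A * z₁ * z₅ - 2 * z₁^3 - 24 * A * z₁^2 * z₂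
            - 12 * z₁ * z₃ * z₄ + 24 * z₂ * z₄^2 - 16 * z₁^2 * z₂^2)
        (y₁^2) y₂ x₂ (y₁ * x₁) (3 * x₁^2 + 2 * y₁^2 * y₂)
      = 3 * (3 * x₁^4 + 6 * A * x₁^2 * y₁^2 + 12 * x₁^2 * y₁^2 * y₂ - 4 * x₁ * x₂ * y₁^3
          - 4 * A * y₁^4 * y₂ - 4 * y₁^4 * y₂^2 + 3 * A^2 * y₁^4 - (2/3) * y₁^6) := by
  intro y₁ y₂ x₁ x₂; ring
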